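/- If all entries b_0, b_1, ..., b_{n-1} of the Schwarz matrix J_n are negative, then all eigenvalues λ_1, ..., λ_n of J_n are real and simple and, suitably ordered, satisfy λ_1 > -λ_2 > λ_3 > ⋯ > (-1)^{n-1}λ_n > 0. -/

import Mathlib

open Polynomial Matrix

/-- The Schwarz matrix `J_n` with parameters `b 0, …, b (n-1)`:
`J(1,1) = -b₀` (1-based), superdiagonal `1`, subdiagonal `-b₁, …, -b_{n-1}`. -/
def schwarzMatrix {n : ℕ} (b : Fin n → ℝ) : Matrix (Fin n) (Fin n) ℝ :=
  Matrix.of fun i j : Fin n =>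
    if (i : ℕ) = 0 ∧ (j : ℕ) = 0 then -b i
    else if (i : ℕ) + 1 = (j : ℕ) then 1
    else if (i : ℕ) = (j : ℕ) + 1 then -b i
    else 0

/-- The multiset of complex roots of a real polynomial. -/
noncomputable def cRoots (p : Polynomial ℝ) : Multiset ℂ :=
  (p.map (algebraMap ℝ ℂ)).roots

/-!
The characteristic polynomials `P k` of the leading `k × k` blocks of `J` satisfy
`P (k+2) = X * P (k+1) - c (k+1) * P k` with `c = -b > 0`, so the Sturm interlacing argument
shows that `P n` has simple real roots `x 0 > ⋯ > x (n-1)` with `(-1)^j * P (n-1) (x j) > 0`.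
The reflected sequence `(-1)^k * P k (-X)` solves the same recurrence, whence
`(-1)^n * P n (-X) = P n + 2 c₀ W n` for the solution `W` with `W 0 = 0`, `W 1 = 1`; together
with the Casoratian `P (n-1) * W n - P n * W (n-1) = c 1 ⋯ c (n-1)` this gives that
`∏ i, (x j + x i)` has the sign `(-1)^j`. So the number of negative sums `x j + x i` has the
parity of `j`; being monotone in `j` and at most `n`, it equals `j`, and that is the interleaving
`x 0 > -x (n-1) > x 1 > -x (n-2) > ⋯ > 0`.
-/

open Filter Asymptotics Finset

section Recurrence

variable {R : Type*} [CommRing R]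

noncomputable def schwarzSeq (c : ℕ → R) (p₀ p₁ : R[X]) : ℕ → R[X]
  | 0 => p₀
  | 1 => p₁
  | k + 2 => X * schwarzSeq c p₀ p₁ (k + 1) - C (c (k + 1)) * schwarzSeq c p₀ p₁ k

variable (c : ℕ → R) (p₀ p₁ q₀ q₁ : R[X])

theorem schwarzSeq_add_C_mul (a : R) : ∀ k,
    schwarzSeq c p₀ p₁ k + C a * schwarzSeq c q₀ q₁ k =
      schwarzSeq c (p₀ + C a * q₀) (p₁ + C a * q₁) k
  | 0 => rfl
  | 1 => rfl
  | k + 2 => by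
    simp only [schwarzSeq, ← schwarzSeq_add_C_mul a k, ← schwarzSeq_add_C_mul a (k + 1)]
    ring

theorem neg_one_pow_mul_schwarzSeq_comp_neg_X : ∀ k,
    (-1) ^ k * (schwarzSeq c p₀ p₁ k).comp (-X) =
      schwarzSeq c (p₀.comp (-X)) (-p₁.comp (-X)) k
  | 0 => by simp [schwarzSeq]
  | 1 => by simp [schwarzSeq]
  | k + 2 => by
    simp only [schwarzSeq, ← neg_one_pow_mul_schwarzSeq_comp_neg_X k,
      ← neg_one_pow_mul_schwarzSeq_comp_neg_X (k + 1), sub_comp, mul_comp, X_comp, C_comp]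
    ring

theorem schwarzSeq_casoratian : ∀ k,
    schwarzSeq c p₀ p₁ k * schwarzSeq c q₀ q₁ (k + 1) -
        schwarzSeq c p₀ p₁ (k + 1) * schwarzSeq c q₀ q₁ k =
      C (∏ i ∈ range k, c (i + 1)) * (p₀ * q₁ - p₁ * q₀)
  | 0 => by simp [schwarzSeq]
  | k + 1 => by
    rw [prod_range_succ, C_mul, mul_comm (C _), mul_assoc, ← schwarzSeq_casoratian k]
    simp only [schwarzSeq]
    ring

noncomputable def schwarzCharpoly (c : ℕ → R) : ℕ → R[X] :=
  schwarzSeq c 1 (X - C (c 0))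

theorem schwarzCharpoly_succ_succ (k : ℕ) :
    schwarzCharpoly c (k + 2) =
      X * schwarzCharpoly c (k + 1) - C (c (k + 1)) * schwarzCharpoly c k :=
  rfl

theorem neg_one_pow_mul_schwarzCharpoly_comp_neg_X (k : ℕ) :
    (-1) ^ k * (schwarzCharpoly c k).comp (-X) =
      schwarzCharpoly c k + C (2 * c 0) * schwarzSeq c 0 1 k := by
  rw [schwarzCharpoly, neg_one_pow_mul_schwarzSeq_comp_neg_X, schwarzSeq_add_C_mul]
  congr 1
  · simp
  · simp only [sub_comp, X_comp, C_comp, two_mul, map_add]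
    ring

theorem schwarzCharpoly_casoratian (k : ℕ) :
    schwarzCharpoly c k * schwarzSeq c 0 1 (k + 1) -
        schwarzCharpoly c (k + 1) * schwarzSeq c 0 1 k =
      C (∏ i ∈ range k, c (i + 1)) := by
  simp [schwarzCharpoly, schwarzSeq_casoratian]

end Recurrence

theorem det_succ_succ_of_last_row_col_zero {R : Type*} [CommRing R] {k : ℕ}
    (A : Matrix (Fin (k + 2)) (Fin (k + 2)) R)
    (hrow : ∀ j : Fin k, A (Fin.last _) j.castSucc.castSucc = 0)
    (hcol : ∀ i : Fin k, A i.castSucc.castSucc (Fin.last _) = 0) :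
    A.det = A (Fin.last _) (Fin.last _) * (A.submatrix Fin.castSucc Fin.castSucc).det
      - A (Fin.last _) (Fin.last k).castSucc * A (Fin.last k).castSucc (Fin.last _)
        * (A.submatrix (Fin.castSucc ∘ Fin.castSucc) (Fin.castSucc ∘ Fin.castSucc)).det := by
  have hminor : (A.submatrix Fin.castSucc (Fin.last k).castSucc.succAbove).det =
      A (Fin.last k).castSucc (Fin.last _) *
        (A.submatrix (Fin.castSucc ∘ Fin.castSucc) (Fin.castSucc ∘ Fin.castSucc)).det := by
    rw [det_succ_column _ (Fin.last k), Fin.sum_univ_castSucc]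
    simp [Fin.succAbove_of_castSucc_lt, hcol, Fin.succAbove_last, Function.comp_def]
  rw [det_succ_row A (Fin.last _), Fin.sum_univ_castSucc, Fin.sum_univ_castSucc]
  simp only [Fin.val_last, Fin.val_castSucc, hrow, mul_zero, Fin.succAbove_last, zero_mul,
    sum_const_zero, odd_add_one_self, Odd.neg_one_pow, neg_mul, one_mul, hminor, zero_add,
    Even.add_self, Even.neg_pow, one_pow]
  ring

theorem charmatrix_submatrix {R n m : Type*} [CommRing R] [Fintype n] [Fintype m]
    [DecidableEq n] [DecidableEq m]
    (M : Matrix n n R) {e : m → n} (he : Function.Injective e) :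
    (charmatrix M).submatrix e e = charmatrix (M.submatrix e e) := by
  ext i j
  rcases eq_or_ne i j with rfl | h
  · simp [charmatrix_apply_eq]
  · simp [charmatrix_apply_ne _ _ _ h, charmatrix_apply_ne _ _ _ (he.ne h)]

theorem schwarzMatrix_submatrix_castSucc {n : ℕ} (b : Fin (n + 1) → ℝ) :
    (schwarzMatrix b).submatrix Fin.castSucc Fin.castSucc = schwarzMatrix (b ∘ Fin.castSucc) := by
  ext i j
  simp only [submatrix_apply, schwarzMatrix, of_apply, Fin.val_castSucc, Function.comp_apply]

theorem charpoly_schwarzMatrix_succ_succ {k : ℕ} (b : Fin (k + 2) → ℝ) :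
    (schwarzMatrix b).charpoly =
      X * (schwarzMatrix (b ∘ Fin.castSucc)).charpoly +
        C (b (Fin.last _)) * (schwarzMatrix (b ∘ Fin.castSucc ∘ Fin.castSucc)).charpoly := by
  have hne : (Fin.last (k + 1)) ≠ (Fin.last k).castSucc := Fin.ne_of_val_ne (by simp)
  have hdiag : schwarzMatrix b (Fin.last _) (Fin.last _) = 0 := by simp [schwarzMatrix]
  have hlower : schwarzMatrix b (Fin.last _) (Fin.last k).castSucc = -b (Fin.last _) := by
    simp [schwarzMatrix, show k + 1 + 1 ≠ k by omega]
  have hupper : schwarzMatrix b (Fin.last k).castSucc (Fin.last _) = 1 := by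
    simp [schwarzMatrix]
  rw [charpoly, det_succ_succ_of_last_row_col_zero, ← submatrix_submatrix,
    charmatrix_submatrix _ (Fin.castSucc_injective _), schwarzMatrix_submatrix_castSucc,
    charmatrix_submatrix _ (Fin.castSucc_injective _), schwarzMatrix_submatrix_castSucc,
    charmatrix_apply_eq, charmatrix_apply_ne _ _ _ hne, charmatrix_apply_ne _ _ _ hne.symm,
    hdiag, hlower, hupper, ← charpoly, ← charpoly]
  · simp only [map_zero, sub_zero, map_neg, map_one, Function.comp_assoc]
    ring

  · intro j
    rw [charmatrix_apply_ne _ _ _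
      (Fin.ne_of_val_ne (by simp only [Fin.val_last, Fin.val_castSucc]; omega))]
    simp [schwarzMatrix, show k + 1 + 1 ≠ (j : ℕ) by omega, show k ≠ (j : ℕ) by omega]
  · intro i
    rw [charmatrix_apply_ne _ _ _
      (Fin.ne_of_val_ne (by simp only [Fin.val_last, Fin.val_castSucc]; omega))]
    simp [schwarzMatrix, show (i : ℕ) ≠ k by omega, show (i : ℕ) ≠ k + 1 + 1 by omega]

theorem charpoly_schwarzMatrix (c : ℕ → ℝ) :
    ∀ k, (schwarzMatrix fun i : Fin k => -c i).charpoly = schwarzCharpoly c k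
  | 0 => by simp [charpoly, schwarzCharpoly, schwarzSeq]
  | 1 => by simp [charpoly, schwarzMatrix, schwarzCharpoly, schwarzSeq]
  | k + 2 => by
    rw [charpoly_schwarzMatrix_succ_succ]
    simp only [Function.comp_def, Fin.val_castSucc, Fin.val_last]
    rw [charpoly_schwarzMatrix c (k + 1), charpoly_schwarzMatrix c k, map_neg,
      schwarzCharpoly_succ_succ]
    ring

theorem Polynomial.Monic.tendsto_neg_one_pow_mul_eval_atBot {q : ℝ[X]} (hq : q.Monic)
    (hdeg : 0 < q.natDegree) :
    Tendsto (fun t => (-1) ^ q.natDegree * q.eval t) atBot atTop := by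
  have hequiv : (fun t => (-1) ^ q.natDegree * q.eval t) ~[atBot] fun t => (-t) ^ q.natDegree := by
    refine ((IsEquivalent.refl (u := fun _ : ℝ => (-1 : ℝ) ^ q.natDegree)).mul
      q.isEquivalent_atBot_lead).congr_left (.of_eq rfl) |>.congr_right (.of_eq ?_)
    ext t
    simp [hq.leadingCoeff, neg_pow t]
  exact hequiv.symm.tendsto_atTop ((tendsto_pow_atTop hdeg.ne').comp tendsto_neg_atBot_atTop)

theorem exists_zeros_of_alternating_signs {f : ℝ → ℝ} (hf : Continuous f) {y : ℕ → ℝ} {n : ℕ}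
    (hy : ∀ j < n, y (j + 1) < y j) (hsign : ∀ j ≤ n, 0 < (-1) ^ j * f (y j)) :
    ∃ ξ : ℕ → ℝ, ∀ j < n, ξ j ∈ Set.Ioo (y (j + 1)) (y j) ∧ f (ξ j) = 0 := by
  have : ∀ j < n, ∃ t ∈ Set.Ioo (y (j + 1)) (y j), f t = 0 := by
    intro j hj
    have h0 := hsign j hj.le
    have h1 := hsign (j + 1) hj
    rw [pow_succ] at h1
    rcases neg_one_pow_eq_or ℝ j with h | h <;> rw [h] at h0 h1
    · exact intermediate_value_Ioo (hy j hj).le hf.continuousOn ⟨by linarith, by linarith⟩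
    · exact intermediate_value_Ioo' (hy j hj).le hf.continuousOn ⟨by linarith, by linarith⟩
  choose! ξ hξ using this
  exact ⟨ξ, hξ⟩

theorem Polynomial.Monic.eq_prod_X_sub_C_of_eval_eq_zero {R : Type*} [CommRing R] [IsDomain R]
    {q : R[X]} (hq : q.Monic) {n : ℕ} (hdeg : q.natDegree = n) {ξ : ℕ → R}
    (hξ : Set.InjOn ξ (range n)) (hroot : ∀ i < n, q.eval (ξ i) = 0) :
    q = ∏ i ∈ range n, (X - C (ξ i)) := by
  subst hdeg
  have hprod : (∏ i ∈ range q.natDegree, (X - C (ξ i))).Monic :=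
    monic_prod_of_monic _ _ fun i _ => monic_X_sub_C _
  refine eq_of_degree_sub_lt_of_eval_index_eq _ hξ ?_ ?_
  · rw [card_range, ← degree_eq_natDegree hq.ne_zero]
    refine degree_sub_lt_left ?_ hq.ne_zero (by rw [hq.leadingCoeff, hprod.leadingCoeff])
    rw [degree_eq_natDegree hq.ne_zero, degree_eq_natDegree hprod.ne_zero,
      natDegree_finsetProd_X_sub_C_eq_card, card_range]
  · intro i hi
    rw [hroot i (mem_range.mp hi), eval_prod]
    exact (prod_eq_zero hi (by simp)).symm

theorem exists_interlacing_roots {q : ℝ[X]} {k : ℕ} (hq : q.Monic) (hdeg : q.natDegree = k + 2)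
    {x : ℕ → ℝ} (hx : StrictAntiOn x (Set.Iic k))
    (hsign : ∀ i ≤ k, 0 < (-1) ^ (i + 1) * q.eval (x i)) :
    ∃ ξ : ℕ → ℝ, q = ∏ j ∈ range (k + 2), (X - C (ξ j)) ∧ StrictAntiOn ξ (Set.Iic (k + 1)) ∧
      ∀ j ≤ k, ξ (j + 1) < x j ∧ x j < ξ j := by
  obtain ⟨M, hMq, hMx⟩ := ((q.tendsto_atTop_of_leadingCoeff_nonneg
    (by rw [degree_eq_natDegree hq.ne_zero, hdeg]; exact_mod_cast (by omega : 0 < k + 2))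
    (by rw [hq.leadingCoeff]; exact zero_le_one)).eventually_gt_atTop 0 |>.and
    (eventually_gt_atTop (x 0))).exists
  obtain ⟨m, hmq, hmx⟩ := ((hq.tendsto_neg_one_pow_mul_eval_atBot (by omega)).eventually_gt_atTop 0
    |>.and (eventually_lt_atBot (x k))).exists
  -- `q` alternates in sign along `M > x 0 > ⋯ > x k > m`, so it has a root in each gap.
  let y : ℕ → ℝ := fun
    | 0 => M
    | i + 1 => if i ≤ k then x i else m
  have hy : ∀ j < k + 2, y (j + 1) < y j := by
    rintro (_ | j) hj
    · simpa [y] using hMx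
    · rcases (show j < k ∨ j = k by omega) with hjk | rfl
      · simpa [y, hjk.le, show j + 1 ≤ k by omega] using
          hx (Set.mem_Iic.2 hjk.le) (Set.mem_Iic.2 (show j + 1 ≤ k by omega)) (lt_add_one j)
      · simpa [y] using hmx
  have hsign' : ∀ j ≤ k + 2, 0 < (-1) ^ j * q.eval (y j) := by
    rintro (_ | j) hj
    · simpa [y] using hMq
    · rcases (show j ≤ k ∨ j = k + 1 by omega) with hjk | rfl
      · simpa [y, hjk] using hsign j hjk
      · simpa [y, hdeg] using hmq
  obtain ⟨ξ, hξ⟩ := exists_zeros_of_alternating_signs q.continuous hy hsign'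
  have hinter : ∀ j ≤ k, ξ (j + 1) < x j ∧ x j < ξ j := fun j hj =>
    ⟨by simpa [y, hj] using (hξ (j + 1) (by omega)).1.2,
      by simpa [y, hj] using (hξ j (by omega)).1.1⟩
  have hanti : StrictAntiOn ξ (Set.Iic (k + 1)) := strictAntiOn_Iic_of_succ_lt fun j hj =>
    ((hinter j (by omega)).1.trans (hinter j (by omega)).2)
  refine ⟨ξ, hq.eq_prod_X_sub_C_of_eval_eq_zero hdeg ?_ fun j hj => (hξ j hj).2, hanti, hinter⟩
  exact hanti.injOn.mono fun i hi => Set.mem_Iic.2 (by simp at hi; omega)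

theorem neg_one_pow_card_filter_neg_mul_prod_pos {ι : Type*} (s : Finset ι) {f : ι → ℝ}
    (hf : ∀ i ∈ s, f i ≠ 0) : 0 < (-1) ^ #{i ∈ s | f i < 0} * ∏ i ∈ s, f i := by
  rw [← prod_filter_mul_prod_filter_not s (fun i => f i < 0), ← mul_assoc, ← prod_neg]
  refine mul_pos (prod_pos fun i hi => ?_) (prod_pos fun i hi => ?_)
  · simp only [mem_filter] at hi
    linarith [hi.2]
  · simp only [mem_filter, not_lt] at hi
    exact lt_of_le_of_ne hi.2 (hf i hi.1).symm

theorem neg_one_pow_mul_prod_sub_pos {k j : ℕ} {x : ℕ → ℝ} {t : ℝ} (hj : j ≤ k + 1)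
    (hbelow : ∀ i < j, t < x i) (habove : ∀ i ≤ k, j ≤ i → x i < t) :
    0 < (-1) ^ j * ∏ i ∈ range (k + 1), (t - x i) := by
  have hfilter : {i ∈ range (k + 1) | t - x i < 0} = range j := by
    ext i
    simp only [mem_filter, mem_range, sub_neg]
    refine ⟨fun ⟨hi, hti⟩ => ?_, fun hi => ⟨by omega, hbelow i hi⟩⟩
    by_contra hji
    exact (habove i (by omega) (by omega)).not_gt hti
  have hpos := neg_one_pow_card_filter_neg_mul_prod_pos (range (k + 1)) (f := fun i => t - x i)
    fun i hi => by
      rcases lt_or_ge i j with hij | hji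
      · exact (sub_neg.2 (hbelow i hij)).ne
      · exact (sub_pos.2 (habove i (by simp at hi; omega) hji)).ne'
  rwa [hfilter, card_range] at hpos

theorem schwarzCharpoly_monic (c : ℕ → ℝ) (k : ℕ) : (schwarzCharpoly c k).Monic :=
  charpoly_schwarzMatrix c k ▸ charpoly_monic _

theorem natDegree_schwarzCharpoly (c : ℕ → ℝ) (k : ℕ) : (schwarzCharpoly c k).natDegree = k := by
  rw [← charpoly_schwarzMatrix, charpoly_natDegree_eq_dim, Fintype.card_fin]

theorem exists_roots_schwarzCharpoly {c : ℕ → ℝ} (hc : ∀ i, 0 < c i) (k : ℕ) :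
    ∃ x : ℕ → ℝ, StrictAntiOn x (Set.Iic k) ∧
      schwarzCharpoly c (k + 1) = ∏ i ∈ range (k + 1), (X - C (x i)) ∧
      ∀ i ≤ k, 0 < (-1) ^ i * (schwarzCharpoly c k).eval (x i) := by
  induction k with
  | zero =>
    refine ⟨fun _ => c 0, fun a ha b hb hab => by simp_all, ?_, ?_⟩ <;>
      simp [schwarzCharpoly, schwarzSeq]
  | succ k ih =>
    obtain ⟨x, hx, hfac, hsign⟩ := ih
    have hroot : ∀ i ≤ k, (schwarzCharpoly c (k + 1)).eval (x i) = 0 := fun i hi => by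
      rw [hfac, eval_prod]
      exact prod_eq_zero (i := i) (mem_range.2 (by omega)) (by simp)
    obtain ⟨ξ, hfac', hξ, hinter⟩ := exists_interlacing_roots (schwarzCharpoly_monic c (k + 2))
      (natDegree_schwarzCharpoly c (k + 2)) hx fun i hi => by
        have hrec : (schwarzCharpoly c (k + 2)).eval (x i) =
            -c (k + 1) * (schwarzCharpoly c k).eval (x i) := by
          simp [schwarzCharpoly_succ_succ, hroot i hi]
        rw [hrec, pow_succ]
        nlinarith [hsign i hi, hc (k + 1)]
    refine ⟨ξ, hξ, hfac', fun j hj => ?_⟩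
    rw [hfac, eval_prod]
    simp only [eval_sub, eval_X, eval_C]
    refine neg_one_pow_mul_prod_sub_pos hj (fun i hi => ?_) fun i hi hji =>
      (hx.antitoneOn (Set.mem_Iic.2 (by omega)) (Set.mem_Iic.2 hi) hji).trans_lt
        (hinter j (by omega)).2
    obtain ⟨j, rfl⟩ : ∃ j', j = j' + 1 := ⟨j - 1, by omega⟩
    exact (hinter j (by omega)).1.trans_le
      (hx.antitoneOn (Set.mem_Iic.2 (by omega)) (Set.mem_Iic.2 (by omega)) (by omega))

theorem neg_one_pow_mul_prod_add_pos {c : ℕ → ℝ} (hc : ∀ i, 0 < c i) {m : ℕ} {x : ℕ → ℝ}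
    (hfac : schwarzCharpoly c (m + 1) = ∏ i ∈ range (m + 1), (X - C (x i)))
    (hsign : ∀ i ≤ m, 0 < (-1) ^ i * (schwarzCharpoly c m).eval (x i)) {j : ℕ} (hj : j ≤ m) :
    0 < (-1) ^ j * ∏ i ∈ range (m + 1), (x j + x i) := by
  have hroot : (schwarzCharpoly c (m + 1)).eval (x j) = 0 := by
    rw [hfac, eval_prod]
    exact prod_eq_zero (i := j) (mem_range.2 (by omega)) (by simp)
  have hW : 0 < (-1) ^ j * (schwarzSeq c 0 1 (m + 1)).eval (x j) := by
    have hcas := congrArg (eval (x j)) (schwarzCharpoly_casoratian c m)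
    simp only [eval_sub, eval_mul, eval_C, hroot, zero_mul, sub_zero] at hcas
    have hprod : 0 < ((-1) ^ j * (schwarzCharpoly c m).eval (x j)) *
        ((-1) ^ j * (schwarzSeq c 0 1 (m + 1)).eval (x j)) := by
      rw [mul_mul_mul_comm, ← pow_add, Even.neg_one_pow ⟨j, rfl⟩, one_mul, hcas]
      exact prod_pos fun i _ => hc (i + 1)
    exact pos_of_mul_pos_right hprod (hsign j hj).le
  have hreflect : ∏ i ∈ range (m + 1), (x j + x i) =
      2 * c 0 * (schwarzSeq c 0 1 (m + 1)).eval (x j) := by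
    have h := congrArg (eval (x j)) (neg_one_pow_mul_schwarzCharpoly_comp_neg_X c (m + 1))
    simp only [eval_mul, eval_add, eval_pow, eval_neg, eval_one, eval_comp, eval_X, eval_C,
      hroot, zero_add] at h
    rw [← h, hfac, eval_prod]
    simp only [eval_sub, eval_X, eval_C, ← neg_add', prod_neg, card_range, ← mul_assoc, ← pow_add,
      Even.neg_one_pow ⟨m + 1, rfl⟩, one_mul]
  rw [hreflect, mul_left_comm]
  exact mul_pos (by linarith [hc 0]) hW

theorem even_add_of_neg_one_pow_mul_pos {a b : ℕ} {z : ℝ} (ha : 0 < (-1) ^ a * z)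
    (hb : 0 < (-1) ^ b * z) : Even (a + b) := by
  have hab : 0 < (-1) ^ (a + b) * z ^ 2 := by
    have := mul_pos ha hb
    rwa [mul_mul_mul_comm, ← pow_add, ← sq] at this
  by_contra hodd
  rw [(Nat.not_even_iff_odd.1 hodd).neg_one_pow] at hab
  nlinarith [sq_nonneg z]

theorem eq_self_of_monotoneOn_of_even_add {N : ℕ → ℕ} {m : ℕ} (hmono : MonotoneOn N (Set.Iic m))
    (hle : N m ≤ m + 1) (hpar : ∀ j ≤ m, Even (N j + j)) : ∀ j ≤ m, N j = j := by
  simp only [Nat.even_iff] at hpar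
  have hmono' : ∀ j < m, N j ≤ N (j + 1) := fun j hj =>
    hmono (Set.mem_Iic.2 hj.le) (Set.mem_Iic.2 hj) (Nat.le_succ j)
  have hlower : ∀ j ≤ m, j ≤ N j := by
    intro j
    induction j with
    | zero => simp
    | succ j ih =>
      intro hj
      have := hmono' j hj
      have := ih (by omega)
      have := hpar (j + 1) hj
      omega
  have hupper : ∀ t ≤ m, N (m - t) ≤ m - t := by
    intro t
    induction t with
    | zero =>
      have := hpar m le_rfl
      simp only [Nat.sub_zero]
      omega
    | succ t ih =>
      intro ht
      have := hmono' (m - (t + 1)) (by omega)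
      have := ih (by omega)
      have := hpar (m - (t + 1)) (by omega)
      rw [show m - (t + 1) + 1 = m - t by omega] at *
      omega
  intro j hj
  have := hupper (m - j) (by omega)
  rw [Nat.sub_sub_self hj] at this
  exact le_antisymm this (hlower j hj)

theorem card_filter_add_neg_eq {m : ℕ} {x : ℕ → ℝ} (hx : StrictAntiOn x (Set.Iic m))
    (hsign : ∀ j ≤ m, 0 < (-1) ^ j * ∏ i ∈ range (m + 1), (x j + x i)) :
    ∀ j ≤ m, #{i ∈ range (m + 1) | x j + x i < 0} = j := by
  refine eq_self_of_monotoneOn_of_even_add (N := fun j => #{i ∈ range (m + 1) | x j + x i < 0})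
    (fun j hj j' hj' hjj' => card_le_card ?_) ((card_filter_le _ _).trans (card_range _).le)
    fun j hj => even_add_of_neg_one_pow_mul_pos
      (neg_one_pow_card_filter_neg_mul_prod_pos _ fun i hi => ?_) (hsign j hj)
  · refine monotone_filter_right _ fun i _ h => ?_
    linarith [hx.antitoneOn hj hj' hjj']
  · exact prod_ne_zero_iff.1 (right_ne_zero_of_mul (hsign j hj).ne') i hi

theorem add_sub_pos_and_succ_add_sub_neg {m : ℕ} {x : ℕ → ℝ} (hx : StrictAntiOn x (Set.Iic m))
    (hsign : ∀ j ≤ m, 0 < (-1) ^ j * ∏ i ∈ range (m + 1), (x j + x i)) :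
    (∀ j ≤ m, 0 < x j + x (m - j)) ∧ ∀ j < m, x (j + 1) + x (m - j) < 0 := by
  have hne : ∀ j ≤ m, ∀ i ≤ m, x j + x i ≠ 0 := fun j hj i hi =>
    prod_ne_zero_iff.1 (right_ne_zero_of_mul (hsign j hj).ne') i (mem_range.2 (by omega))
  have hN := card_filter_add_neg_eq hx hsign
  have hx' : ∀ {i i'}, i ≤ i' → i' ≤ m → x i' ≤ x i := fun hii' hi' =>
    hx.antitoneOn (Set.mem_Iic.2 (hii'.trans hi')) (Set.mem_Iic.2 hi') hii'
  constructor
  · intro j hj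
    by_contra h
    have hlt := lt_of_le_of_ne (not_lt.1 h) (hne j hj (m - j) (by omega))
    have hsub : Ico (m - j) (m + 1) ⊆ {i ∈ range (m + 1) | x j + x i < 0} := fun i hi => by
      simp only [mem_Ico] at hi
      simp only [mem_filter, mem_range]
      exact ⟨hi.2, by linarith [hx' hi.1 (by omega)]⟩
    have := card_le_card hsub
    rw [Nat.card_Ico, hN j hj] at this
    omega
  · intro j hj
    by_contra h
    have hgt := lt_of_le_of_ne (not_lt.1 h) (hne (j + 1) hj (m - j) (by omega)).symm
    have hsub : {i ∈ range (m + 1) | x (j + 1) + x i < 0} ⊆ Ico (m - j + 1) (m + 1) :=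
      fun i hi => by
        simp only [mem_filter, mem_range] at hi
        simp only [mem_Ico]
        refine ⟨?_, hi.1⟩
        by_contra hij
        linarith [hx' (show i ≤ m - j by omega) (by omega)]
    have := card_le_card hsub
    rw [Nat.card_Ico, hN (j + 1) hj] at this
    omega

/-- The order `0, m, 1, m - 1, 2, …` of `Fin (m + 1)`. -/
def zigzag (m : ℕ) (i : Fin (m + 1)) : Fin (m + 1) :=
  if (i : ℕ) % 2 = 0 then ⟨i / 2, by omega⟩ else ⟨m - i / 2, by omega⟩

theorem zigzag_injective (m : ℕ) : Function.Injective (zigzag m) := by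
  intro i j hij
  simp only [zigzag] at hij
  split_ifs at hij <;> simp only [Fin.mk.injEq] at hij <;> ext <;> omega

theorem neg_one_pow_mul_zigzag {m : ℕ} (x : ℕ → ℝ) (i : Fin (m + 1)) :
    (-1) ^ (i : ℕ) * x (zigzag m i) = if (i : ℕ) % 2 = 0 then x (i / 2) else -x (m - i / 2) := by
  unfold zigzag
  split_ifs with h
  · rw [(Nat.even_iff.2 h).neg_one_pow, one_mul]
  · rw [(Nat.odd_iff.2 (by omega)).neg_one_pow, neg_one_mul]

theorem strictAnti_neg_one_pow_mul_zigzag {m : ℕ} {x : ℕ → ℝ}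
    (hA : ∀ j ≤ m, 0 < x j + x (m - j)) (hB : ∀ j < m, x (j + 1) + x (m - j) < 0) :
    StrictAnti fun i : Fin (m + 1) => (-1) ^ (i : ℕ) * x (zigzag m i) := by
  rw [Fin.strictAnti_iff_succ_lt]
  intro i
  rw [neg_one_pow_mul_zigzag, neg_one_pow_mul_zigzag, Fin.val_succ, Fin.val_castSucc]
  have hi := i.isLt
  split_ifs with h₁ h₂ h₂
  · omega
  · rw [show ((i : ℕ) + 1) / 2 = i / 2 + 1 by omega]
    linarith [hB (i / 2) (by omega)]
  · rw [show ((i : ℕ) + 1) / 2 = i / 2 by omega]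
    linarith [hA (i / 2) (by omega)]
  · omega

theorem neg_one_pow_mul_zigzag_pos {m : ℕ} {x : ℕ → ℝ}
    (hA : ∀ j ≤ m, 0 < x j + x (m - j)) (hB : ∀ j < m, x (j + 1) + x (m - j) < 0)
    (i : Fin (m + 1)) : 0 < (-1) ^ (i : ℕ) * x (zigzag m i) := by
  have hlast : 0 < (-1) ^ (Fin.last m : ℕ) * x (zigzag m (Fin.last m)) := by
    rw [neg_one_pow_mul_zigzag, Fin.val_last]
    split_ifs with h
    · have := hA (m / 2) (by omega)
      rw [show m - m / 2 = m / 2 by omega] at this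
      linarith
    · have := hB (m / 2) (by omega)
      rw [show m - m / 2 = m / 2 + 1 by omega] at this ⊢
      linarith
  rcases (Fin.le_last i).eq_or_lt with rfl | hi
  · exact hlast
  · exact hlast.trans (strictAnti_neg_one_pow_mul_zigzag hA hB hi)

/-- if all parameters of the Schwarz matrix are negative, then its
eigenvalues are real and simple and, suitably ordered, satisfy
`λ₁ > -λ₂ > λ₃ > ⋯ > (-1)^{n-1} λ_n > 0`. -/
theorem schwarz_stmt7 {n : ℕ} (b : Fin n → ℝ) (hb : ∀ i, b i < 0) :
    ∃ lam : Fin n → ℝ,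
      (schwarzMatrix b).charpoly = ∏ i, (Polynomial.X - Polynomial.C (lam i)) ∧
      StrictAnti (fun i : Fin n => (-1 : ℝ) ^ (i : ℕ) * lam i) ∧
      ∀ i : Fin n, 0 < (-1 : ℝ) ^ (i : ℕ) * lam i := by
  cases n with
  | zero => exact ⟨Fin.elim0, by simp [charpoly], fun i => i.elim0, fun i => i.elim0⟩
  | succ m =>
    set c : ℕ → ℝ := fun i => if h : i < m + 1 then -b ⟨i, h⟩ else 1
    have hc : ∀ i, 0 < c i := fun i => by
      simp only [c]
      split_ifs with h
      · linarith [hb ⟨i, h⟩]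
      · exact one_pos
    have hbc : b = fun i : Fin (m + 1) => -c i :=
      funext fun i => by simp [c, Nat.lt_succ_iff.1 i.isLt]
    obtain ⟨x, hx, hfac, hsign⟩ := exists_roots_schwarzCharpoly hc m
    obtain ⟨hA, hB⟩ := add_sub_pos_and_succ_add_sub_neg hx fun j hj =>
      neg_one_pow_mul_prod_add_pos hc hfac hsign hj
    refine ⟨fun i => x (zigzag m i), ?_, strictAnti_neg_one_pow_mul_zigzag hA hB,
      neg_one_pow_mul_zigzag_pos hA hB⟩
    rw [hbc, charpoly_schwarzMatrix, hfac, ← Fin.prod_univ_eq_prod_range (fun i => X - C (x i))]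
    exact (Equiv.prod_comp (Equiv.ofBijective _ (zigzag_injective m).bijective_of_finite)
      (fun i : Fin (m + 1) => X - C (x i))).symm
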